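/- Let n ≥ 3, let w ∈ span(e₂,…,e_{n-1}) be nonzero, and let v ∈ ℝⁿ with vₙ > 0. Define the affine map γ : ℝⁿ → ℝⁿ by γ(x) = U_w(x) + v, where U_w(x) = x − xₙ w + (B(x,w) − xₙ B(w,w)/2) e₁, and define m : ℝⁿ → ℝ^{n+2} by m(x) = (−q_{n-1,1}(x)/2, x₁, …, xₙ, 1). Then the Euclidean-normalized vectors m(γⁱ(0))/‖m(γⁱ(0))‖ converge to the standard basis vector e₀ of ℝ^{n+2} as i → +∞, and likewise the normalized vectors m((γ⁻¹)ⁱ(0))/‖m((γ⁻¹)ⁱ(0))‖ converge to e₀ as i → +∞. -/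

import Mathlib

/- In this file `ℝⁿ` of the paper (with `n ≥ 3`) is encoded as `Fin (n + 3) → ℝ`, and
the ambient `ℝ^{n+2}` (coordinates `x₀, …, x_{n+1}`) as `Fin (n + 5) → ℝ` (the Lean
parameter `n : ℕ` corresponds to the paper's `n - 3`). -/

/-- The Lorentzian bilinear form `B(x,y) = x₁yₙ + xₙy₁ + Σ_{i=2}^{n-1} xᵢyᵢ`, so that
`q_{n-1,1}(x) = B(x,x)`. -/
noncomputable def bform (n : ℕ) (x y : Fin (n + 3) → ℝ) : ℝ :=
  x ⟨0, by omega⟩ * y ⟨n + 2, by omega⟩ + x ⟨n + 2, by omega⟩ * y ⟨0, by omega⟩ +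
    ∑ i : Fin (n + 3), if 1 ≤ i.val ∧ i.val ≤ n + 1 then x i * y i else 0

/-- The first standard basis vector `e₁` of `ℝⁿ`. -/
noncomputable def eOne (n : ℕ) : Fin (n + 3) → ℝ :=
  Pi.single (⟨0, by omega⟩ : Fin (n + 3)) (1 : ℝ)

/-- The unipotent linear map `U_w(x) = x - xₙ w + (B(x,w) - xₙ B(w,w)/2) e₁`. -/
noncomputable def uMap (n : ℕ) (w x : Fin (n + 3) → ℝ) : Fin (n + 3) → ℝ :=
  x - x ⟨n + 2, by omega⟩ • w +
    (bform n x w - x ⟨n + 2, by omega⟩ * bform n w w / 2) • eOne n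

/-- The Minkowski chart `m(x) = (-q_{n-1,1}(x)/2, x₁, …, xₙ, 1) ∈ ℝ^{n+2}`. -/
noncomputable def mEmb (n : ℕ) (x : Fin (n + 3) → ℝ) : Fin (n + 5) → ℝ :=
  fun j =>
    if h0 : j.val = 0 then -(bform n x x) / 2
    else if hl : j.val = n + 4 then 1
    else x ⟨j.val - 1, by have := j.isLt; omega⟩

/-- The Euclidean norm on `ℝ^m`. -/
noncomputable def eucNorm {m : ℕ} (x : Fin m → ℝ) : ℝ := Real.sqrt (∑ j, x j ^ 2)

open Filter

lemma bform_add_left (n : ℕ) (x x' y : Fin (n + 3) → ℝ) :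
    bform n (x + x') y = bform n x y + bform n x' y := by
  unfold bform
  simp only [Pi.add_apply]
  rw [Finset.sum_congr rfl (fun i _ => show (if 1 ≤ i.val ∧ i.val ≤ n+1 then (x i + x' i) * y i else 0) = (if 1 ≤ i.val ∧ i.val ≤ n+1 then x i * y i else 0) + (if 1 ≤ i.val ∧ i.val ≤ n+1 then x' i * y i else 0) from by split <;> ring), Finset.sum_add_distrib]
  ring

lemma bform_smul_left (n : ℕ) (c : ℝ) (x y : Fin (n + 3) → ℝ) :
    bform n (c • x) y = c * bform n x y := by
  unfold bform
  simp only [Pi.smul_apply, smul_eq_mul]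
  rw [Finset.sum_congr rfl (fun i _ => show (if 1 ≤ i.val ∧ i.val ≤ n+1 then (c * x i) * y i else 0) = c * (if 1 ≤ i.val ∧ i.val ≤ n+1 then x i * y i else 0) from by split <;> ring), ← Finset.mul_sum]
  ring

lemma bform_comm (n : ℕ) (x y : Fin (n + 3) → ℝ) : bform n x y = bform n y x := by
  unfold bform
  rw [Finset.sum_congr rfl (fun i _ => show (if 1 ≤ i.val ∧ i.val ≤ n+1 then x i * y i else 0) = (if 1 ≤ i.val ∧ i.val ≤ n+1 then y i * x i else 0) from by split <;> ring)]
  ring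

lemma bform_smul_right (n : ℕ) (c : ℝ) (x y : Fin (n + 3) → ℝ) :
    bform n x (c • y) = c * bform n x y := by
  rw [bform_comm, bform_smul_left, bform_comm]

lemma bform_add_right (n : ℕ) (x y y' : Fin (n + 3) → ℝ) :
    bform n x (y + y') = bform n x y + bform n x y' := by
  rw [bform_comm, bform_add_left, bform_comm, bform_comm n y']

lemma eOne_apply_zero (n : ℕ) : eOne n ⟨0, by omega⟩ = 1 := Pi.single_eq_same _ _

lemma eOne_apply_ne (n : ℕ) (j : Fin (n+3)) (h : j.val ≠ 0) : eOne n j = 0 := by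
  apply Pi.single_eq_of_ne
  simp [Fin.ext_iff, h]

lemma bform_eOne_left (n : ℕ) (y : Fin (n + 3) → ℝ) :
    bform n (eOne n) y = y ⟨n + 2, by omega⟩ := by
  unfold bform
  rw [eOne_apply_zero, eOne_apply_ne n _ (by simp), Finset.sum_eq_zero]
  · ring
  · intro i _
    split
    · rw [eOne_apply_ne n i (by omega)]; ring
    · rfl

lemma bform_eOne_right (n : ℕ) (x : Fin (n + 3) → ℝ) :
    bform n x (eOne n) = x ⟨n + 2, by omega⟩ := by
  rw [bform_comm, bform_eOne_left]

lemma bform_sub_left (n : ℕ) (x y z : Fin (n + 3) → ℝ) :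
    bform n (x - y) z = bform n x z - bform n y z := by
  rw [sub_eq_add_neg, bform_add_left, ← neg_one_smul ℝ y, bform_smul_left]; ring

lemma bform_neg_right (n : ℕ) (x y : Fin (n + 3) → ℝ) :
    bform n x (-y) = -bform n x y := by
  rw [← neg_one_smul ℝ y, bform_smul_right]; ring

lemma bform_neg_left (n : ℕ) (x y : Fin (n + 3) → ℝ) :
    bform n (-x) y = -bform n x y := by
  rw [← neg_one_smul ℝ x, bform_smul_left]; ring

lemma uMap_last (n : ℕ) (w x : Fin (n + 3) → ℝ) (hwn : w ⟨n + 2, by omega⟩ = 0) :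
    uMap n w x ⟨n + 2, by omega⟩ = x ⟨n + 2, by omega⟩ := by
  simp [uMap, hwn, eOne_apply_ne n (⟨n + 2, by omega⟩ : Fin (n + 3)) (by simp)]

lemma bform_uMap_w (n : ℕ) (w x : Fin (n + 3) → ℝ) (hwn : w ⟨n + 2, by omega⟩ = 0) :
    bform n (uMap n w x) w =
      bform n x w - x ⟨n + 2, by omega⟩ * bform n w w := by
  unfold uMap
  rw [bform_add_left, bform_sub_left, bform_smul_left, bform_smul_left, bform_eOne_left, hwn]
  ring

lemma uMap_inv (n : ℕ) (w x : Fin (n + 3) → ℝ) (hwn : w ⟨n + 2, by omega⟩ = 0) :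
    uMap n (-w) (uMap n w x) = x := by
  have hy := uMap_last n w x hwn
  have hby : bform n (uMap n w x) (-w) =
      -(bform n x w - x ⟨n + 2, by omega⟩ * bform n w w) := by
    rw [bform_neg_right, bform_uMap_w n w x hwn]
  have hbww : bform n (-w) (-w) = bform n w w := by
    rw [bform_neg_right, bform_neg_left, neg_neg]
  rw [show uMap n (-w) (uMap n w x) =
    uMap n w x - (uMap n w x) ⟨n + 2, by omega⟩ • (-w) +
      (bform n (uMap n w x) (-w) -
        (uMap n w x) ⟨n + 2, by omega⟩ * bform n (-w) (-w) / 2) • eOne n from rfl]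
  rw [hy, hby, hbww]
  unfold uMap
  funext j
  simp only [Pi.add_apply, Pi.sub_apply, Pi.smul_apply, Pi.neg_apply, smul_eq_mul]
  ring

lemma uMap_add (n : ℕ) (w x y : Fin (n + 3) → ℝ) :
    uMap n w (x + y) = uMap n w x + uMap n w y := by
  unfold uMap
  rw [bform_add_left]
  funext j
  simp only [Pi.add_apply, Pi.sub_apply, Pi.smul_apply, smul_eq_mul]
  ring

lemma uMap_neg (n : ℕ) (w x : Fin (n + 3) → ℝ) :
    uMap n w (-x) = -uMap n w x := by
  unfold uMap
  rw [bform_neg_left]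
  funext j
  simp only [Pi.add_apply, Pi.sub_apply, Pi.smul_apply, Pi.neg_apply, smul_eq_mul]
  ring

/-- Explicit formula for the iterates `γ^[i] 0`. -/
noncomputable def Xseq (n : ℕ) (w v : Fin (n + 3) → ℝ) (i : ℕ) : Fin (n + 3) → ℝ :=
  (i : ℝ) • v + (-(v ⟨n + 2, by omega⟩ * ((i : ℝ) * ((i : ℝ) - 1) / 2))) • w +
    (bform n v w * ((i : ℝ) * ((i : ℝ) - 1) / 2) -
      v ⟨n + 2, by omega⟩ * bform n w w * ((i : ℝ) * ((i : ℝ) - 1) * (2 * (i : ℝ) - 1) / 6) / 2) • eOne n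

lemma Xseq_last (n : ℕ) (w v : Fin (n + 3) → ℝ) (hwn : w ⟨n + 2, by omega⟩ = 0) (i : ℕ) :
    Xseq n w v i ⟨n + 2, by omega⟩ = (i : ℝ) * v ⟨n + 2, by omega⟩ := by
  simp [Xseq, hwn, eOne_apply_ne n (⟨n+2, by omega⟩ : Fin (n+3)) (by simp)]

lemma bform_Xseq_w (n : ℕ) (w v : Fin (n + 3) → ℝ) (hwn : w ⟨n + 2, by omega⟩ = 0) (i : ℕ) :
    bform n (Xseq n w v i) w =
      (i : ℝ) * bform n v w -
        v ⟨n + 2, by omega⟩ * ((i : ℝ) * ((i : ℝ) - 1) / 2) * bform n w w := by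
  unfold Xseq
  rw [bform_add_left, bform_add_left, bform_smul_left, bform_smul_left, bform_smul_left,
    bform_eOne_left, hwn]
  ring

lemma Xseq_iterate (n : ℕ) (w v : Fin (n + 3) → ℝ)
    (hwn : w ⟨n + 2, by omega⟩ = 0)
    (γ : (Fin (n + 3) → ℝ) → (Fin (n + 3) → ℝ)) (hγ : ∀ x, γ x = uMap n w x + v)
    (i : ℕ) : γ^[i] 0 = Xseq n w v i := by
  induction i with
  | zero =>
    funext j
    simp [Xseq]
  | succ i ih =>
    rw [Function.iterate_succ_apply', ih, hγ]
    unfold uMap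
    rw [bform_Xseq_w n w v hwn, Xseq_last n w v hwn]
    funext j
    unfold Xseq
    simp only [Pi.add_apply, Pi.sub_apply, Pi.smul_apply, smul_eq_mul]
    push_cast
    ring

lemma bform_Xseq_Xseq (n : ℕ) (w v : Fin (n + 3) → ℝ)
    (hwn : w ⟨n + 2, by omega⟩ = 0) (i : ℕ) :
    bform n (Xseq n w v i) (Xseq n w v i) =
      bform n v v * (i : ℝ) ^ 2 +
        v ⟨n + 2, by omega⟩ ^ 2 * bform n w w * ((i : ℝ) ^ 2 - (i : ℝ) ^ 4) / 12 := by
  have hwv : bform n w v = bform n v w := bform_comm n w v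
  have hwe : bform n w (eOne n) = 0 := by rw [bform_eOne_right, hwn]
  have hew : bform n (eOne n) w = 0 := by rw [bform_eOne_left, hwn]
  have hve : bform n v (eOne n) = v ⟨n + 2, by omega⟩ := bform_eOne_right n v
  have hev : bform n (eOne n) v = v ⟨n + 2, by omega⟩ := bform_eOne_left n v
  have hee : bform n (eOne n) (eOne n) = 0 := by
    rw [bform_eOne_left, eOne_apply_ne n _ (by simp)]
  unfold Xseq
  rw [bform_add_left, bform_add_left, bform_smul_left, bform_smul_left, bform_smul_left]
  rw [bform_add_right, bform_add_right, bform_smul_right, bform_smul_right, bform_smul_right,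
      bform_add_right, bform_add_right, bform_smul_right, bform_smul_right, bform_smul_right,
      bform_add_right, bform_add_right, bform_smul_right, bform_smul_right, bform_smul_right]
  rw [hwv, hwe, hew, hve, hev, hee]
  ring

lemma inv_nat_tendsto : Tendsto (fun i : ℕ => ((i : ℝ))⁻¹) atTop (nhds 0) :=
  tendsto_inv_atTop_zero.comp tendsto_natCast_atTop_atTop

lemma cube_over (c3 c2 c1 c0 : ℝ) :
    Tendsto (fun i : ℕ =>
      ((i : ℝ) ^ 4)⁻¹ * (c3 * (i : ℝ) ^ 3 + c2 * (i : ℝ) ^ 2 + c1 * (i : ℝ) + c0))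
      atTop (nhds 0) := by
  have hcont : Continuous fun t : ℝ => c3 * t + c2 * t ^ 2 + c1 * t ^ 3 + c0 * t ^ 4 := by
    continuity
  have h2 := (hcont.tendsto 0).comp inv_nat_tendsto
  simp only [Function.comp_def] at h2
  norm_num at h2
  apply h2.congr'
  filter_upwards [eventually_ge_atTop 1] with i hi
  have hne : (i : ℝ) ≠ 0 := by
    have : (1 : ℝ) ≤ (i : ℝ) := by exact_mod_cast hi
    linarith
  field_simp

lemma quart_over (c c2 : ℝ) :
    Tendsto (fun i : ℕ => ((i : ℝ) ^ 4)⁻¹ * (c * (i : ℝ) ^ 4 + c2 * (i : ℝ) ^ 2))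
      atTop (nhds c) := by
  have hcont : Continuous fun t : ℝ => c + c2 * t ^ 2 := by continuity
  have h2 := (hcont.tendsto 0).comp inv_nat_tendsto
  simp only [Function.comp_def] at h2
  norm_num at h2
  apply h2.congr'
  filter_upwards [eventually_ge_atTop 1] with i hi
  have hne : (i : ℝ) ≠ 0 := by
    have : (1 : ℝ) ≤ (i : ℝ) := by exact_mod_cast hi
    linarith
  field_simp

lemma bform_self_pos (n : ℕ) (w : Fin (n + 3) → ℝ)
    (hw0 : w ⟨0, by omega⟩ = 0) (hwn : w ⟨n + 2, by omega⟩ = 0) (hw : w ≠ 0) :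
    0 < bform n w w := by
  obtain ⟨j, hj⟩ : ∃ j, w j ≠ 0 := Function.ne_iff.mp hw
  have hjmid : 1 ≤ j.val ∧ j.val ≤ n + 1 := by
    have hlt := j.isLt
    by_contra hc
    have : j.val = 0 ∨ j.val = n + 2 := by omega
    rcases this with h | h
    · exact hj (by rw [show j = ⟨0, by omega⟩ from Fin.ext h]; exact hw0)
    · exact hj (by rw [show j = ⟨n + 2, by omega⟩ from Fin.ext h]; exact hwn)
  unfold bform
  rw [hw0, hwn]
  simp only [mul_zero, zero_mul, zero_add]
  apply Finset.sum_pos'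
  · intro i _
    split
    · exact mul_self_nonneg _
    · exact le_refl 0
  · refine ⟨j, Finset.mem_univ j, ?_⟩
    rw [if_pos hjmid]
    rcases lt_or_gt_of_ne hj with h | h
    · exact mul_pos_of_neg_of_neg h h
    · exact mul_pos h h

lemma eucNorm_continuous {m : ℕ} : Continuous (eucNorm (m := m)) := by
  unfold eucNorm
  exact Real.continuous_sqrt.comp (by continuity)

lemma eucNorm_smul {m : ℕ} (r : ℝ) (x : Fin m → ℝ) : eucNorm (r • x) = |r| * eucNorm x := by
  unfold eucNorm
  rw [show ∑ j, (r • x) j ^ 2 = r ^ 2 * ∑ j, x j ^ 2 by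
    rw [Finset.mul_sum]; exact Finset.sum_congr rfl fun j _ => by simp [mul_pow]]
  rw [Real.sqrt_mul (sq_nonneg r), Real.sqrt_sq_eq_abs]

lemma eucNorm_single {m : ℕ} (k : Fin m) (c : ℝ) (hc : 0 ≤ c) :
    eucNorm (Pi.single k c) = c := by
  unfold eucNorm
  rw [show ∑ j, (Pi.single k c : Fin m → ℝ) j ^ 2 = c ^ 2 by
    rw [Finset.sum_eq_single k]
    · simp
    · intro j _ hj; rw [Pi.single_eq_of_ne hj]; ring
    · intro h; exact absurd (Finset.mem_univ k) h]
  exact Real.sqrt_sq hc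

lemma mEmb_apply_zero (n : ℕ) (x : Fin (n + 3) → ℝ) (j : Fin (n + 5)) (hj : j.val = 0) :
    mEmb n x j = -(bform n x x) / 2 := by
  simp only [mEmb]; rw [dif_pos hj]

lemma mEmb_apply_last (n : ℕ) (x : Fin (n + 3) → ℝ) (j : Fin (n + 5)) (hj : j.val = n + 4) :
    mEmb n x j = 1 := by
  simp only [mEmb]; rw [dif_neg (by omega), dif_pos hj]

lemma mEmb_apply_mid (n : ℕ) (x : Fin (n + 3) → ℝ) (j : Fin (n + 5))
    (h0 : j.val ≠ 0) (h4 : j.val ≠ n + 4) :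
    mEmb n x j = x ⟨j.val - 1, by have := j.isLt; omega⟩ := by
  simp only [mEmb]; rw [dif_neg h0, dif_neg h4]

set_option maxHeartbeats 1000000 in
set_option synthInstance.maxHeartbeats 400000 in
lemma main_lemma (n : ℕ) (w v : Fin (n + 3) → ℝ)
    (hw0 : w ⟨0, by omega⟩ = 0) (hwn : w ⟨n + 2, by omega⟩ = 0) (hw : w ≠ 0)
    (hv : v ⟨n + 2, by omega⟩ ≠ 0)
    (γ : (Fin (n + 3) → ℝ) → (Fin (n + 3) → ℝ))
    (hγ : ∀ x, γ x = uMap n w x + v) :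
    Filter.Tendsto
        (fun i : ℕ => (eucNorm (mEmb n (γ^[i] 0)))⁻¹ • mEmb n (γ^[i] 0))
        Filter.atTop (nhds (Pi.single (⟨0, Nat.succ_pos _⟩ : Fin (n + 5)) (1 : ℝ))) := by
  set k0 : Fin (n + 5) := ⟨0, Nat.succ_pos _⟩ with hk0
  set vn : ℝ := v ⟨n + 2, by omega⟩ with hvn
  set S : ℝ := bform n w w with hSdef
  have hS : 0 < S := bform_self_pos n w hw0 hwn hw
  set A : ℝ := bform n v w with hA
  set Q : ℝ := bform n v v with hQ
  set c : ℝ := vn ^ 2 * S / 24 with hc'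
  have hc : 0 < c := by
    have h2 : 0 < vn ^ 2 := by rcases hv.lt_or_gt with h | h <;> nlinarith
    rw [hc']
    positivity
  set d : ℝ := -Q / 2 - c with hd
  set a : ℕ → Fin (n + 5) → ℝ := fun i => mEmb n (Xseq n w v i) with ha
  set b : ℕ → Fin (n + 5) → ℝ := fun i => ((i : ℝ) ^ 4)⁻¹ • a i with hbdef
  -- componentwise limit of b
  have hb : Tendsto b atTop (nhds (Pi.single k0 c)) := by
    rw [tendsto_pi_nhds]
    intro j
    have hjlt := j.isLt
    by_cases hj0 : j.val = 0
    · have hjeq : j = k0 := Fin.ext hj0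
      subst hjeq
      have hval : ∀ i : ℕ, b i k0 = ((i : ℝ) ^ 4)⁻¹ * (c * (i : ℝ) ^ 4 + d * (i : ℝ) ^ 2) := by
        intro i
        simp only [hbdef, Pi.smul_apply, smul_eq_mul, ha]
        rw [mEmb_apply_zero n _ k0 rfl, bform_Xseq_Xseq n w v hwn]
        rw [hd, hc', hQ, hvn, hSdef]
        ring
      rw [Pi.single_eq_same]
      exact (quart_over c d).congr (fun i => (hval i).symm)
    · have hjne : j ≠ k0 := fun h => hj0 (by rw [h])
      rw [Pi.single_eq_of_ne hjne]
      by_cases hj4 : j.val = n + 4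
      · have hval : ∀ i : ℕ, b i j = ((i : ℝ) ^ 4)⁻¹ *
            (0 * (i : ℝ) ^ 3 + 0 * (i : ℝ) ^ 2 + 0 * (i : ℝ) + 1) := by
          intro i
          simp only [hbdef, Pi.smul_apply, smul_eq_mul, ha]
          rw [mEmb_apply_last n _ j hj4]
          ring
        exact (cube_over 0 0 0 1).congr (fun i => (hval i).symm)
      · set k : Fin (n + 3) := ⟨j.val - 1, by omega⟩ with hk
        set E : ℝ := eOne n k with hE
        have hval : ∀ i : ℕ, b i j = ((i : ℝ) ^ 4)⁻¹ *
            ((-(vn * S) * E / 6) * (i : ℝ) ^ 3 +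
              (-(vn * w k) / 2 + A * E / 2 + vn * S * E / 4) * (i : ℝ) ^ 2 +
              (v k + vn * w k / 2 - A * E / 2 - vn * S * E / 12) * (i : ℝ) + 0) := by
          intro i
          simp only [hbdef, Pi.smul_apply, smul_eq_mul, ha]
          rw [mEmb_apply_mid n _ j hj0 hj4]
          show ((i : ℝ) ^ 4)⁻¹ * (Xseq n w v i k) = _
          simp only [Xseq, Pi.add_apply, Pi.smul_apply, smul_eq_mul, ← hvn, ← hA, ← hSdef, ← hE]
          ring
        exact (cube_over (-(vn * S) * E / 6) (-(vn * w k) / 2 + A * E / 2 + vn * S * E / 4)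
          (v k + vn * w k / 2 - A * E / 2 - vn * S * E / 12) 0).congr (fun i => (hval i).symm)
  -- norm of b tends to c
  have henorm : Tendsto (fun i => eucNorm (b i)) atTop (nhds c) := by
    have := (eucNorm_continuous.tendsto (Pi.single k0 c)).comp hb
    rwa [eucNorm_single k0 c hc.le] at this
  have hfinal : Tendsto (fun i => (eucNorm (b i))⁻¹ • b i) atTop
      (nhds ((c⁻¹ : ℝ) • (Pi.single k0 c : Fin (n + 5) → ℝ))) :=
    Tendsto.smul (henorm.inv₀ hc.ne') hb
  have hlim : (c⁻¹ : ℝ) • (Pi.single k0 c : Fin (n + 5) → ℝ) = Pi.single k0 (1 : ℝ) := by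
    funext j
    by_cases hj : j = k0
    · subst hj; simp [Pi.single_eq_same, inv_mul_cancel₀ hc.ne']
    · simp [Pi.single_eq_of_ne hj]
  rw [hlim] at hfinal
  -- transfer back
  apply hfinal.congr'
  filter_upwards [eventually_ge_atTop 1] with i hi
  have hipos : (0 : ℝ) < (i : ℝ) ^ 4 := by
    have : (1 : ℝ) ≤ (i : ℝ) := by exact_mod_cast hi
    positivity
  have h1 : eucNorm (b i) = ((i : ℝ) ^ 4)⁻¹ * eucNorm (a i) := by
    rw [hbdef, eucNorm_smul, abs_of_pos (inv_pos.mpr hipos)]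
  rw [Xseq_iterate n w v hwn γ hγ i]
  show (eucNorm (b i))⁻¹ • b i = (eucNorm (a i))⁻¹ • a i
  rw [h1, show b i = ((i : ℝ) ^ 4)⁻¹ • a i from rfl, smul_smul]
  congr 1
  calc (((i : ℝ) ^ 4)⁻¹ * eucNorm (a i))⁻¹ * ((i : ℝ) ^ 4)⁻¹
      = (eucNorm (a i))⁻¹ * (((i : ℝ) ^ 4) * ((i : ℝ) ^ 4)⁻¹) := by
        rw [mul_inv, inv_inv]; ring
    _ = (eucNorm (a i))⁻¹ := by rw [mul_inv_cancel₀ hipos.ne', mul_one]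


/-- For the affine map `γ(x) = U_w(x) + v` with `w ∈ span(e₂,…,e_{n-1})`
nonzero and `vₙ > 0`, the Euclidean-normalized vectors `m(γⁱ(0))/‖m(γⁱ(0))‖` converge
to `e₀` as `i → +∞`, and likewise for the iterates of `γ⁻¹`. -/
theorem stmt_13 (n : ℕ) (w v : Fin (n + 3) → ℝ)
    (hw0 : w ⟨0, by omega⟩ = 0) (hwn : w ⟨n + 2, by omega⟩ = 0) (hw : w ≠ 0)
    (hv : v ⟨n + 2, by omega⟩ > 0)
    (γ γinv : (Fin (n + 3) → ℝ) → (Fin (n + 3) → ℝ))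
    (hγ : ∀ x, γ x = uMap n w x + v)
    (hleft : Function.LeftInverse γinv γ) (hright : Function.RightInverse γinv γ) :
    Filter.Tendsto
        (fun i : ℕ => (eucNorm (mEmb n (γ^[i] 0)))⁻¹ • mEmb n (γ^[i] 0))
        Filter.atTop (nhds (Pi.single (⟨0, by omega⟩ : Fin (n + 5)) (1 : ℝ))) ∧
      Filter.Tendsto
        (fun i : ℕ => (eucNorm (mEmb n (γinv^[i] 0)))⁻¹ • mEmb n (γinv^[i] 0))
        Filter.atTop (nhds (Pi.single (⟨0, by omega⟩ : Fin (n + 5)) (1 : ℝ))) := by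
  refine ⟨main_lemma n w v hw0 hwn hw (ne_of_gt hv) γ hγ, ?_⟩
  have hnw0 : (-w) ⟨0, by omega⟩ = 0 := by rw [Pi.neg_apply, hw0, neg_zero]
  have hnwn : (-w) ⟨n + 2, by omega⟩ = 0 := by rw [Pi.neg_apply, hwn, neg_zero]
  set v' : Fin (n + 3) → ℝ := -(uMap n (-w) v) with hv'
  have hgid : ∀ x, γ (uMap n (-w) x + v') = x := by
    intro x
    rw [hγ, uMap_add, hv']
    have h1 : uMap n w (uMap n (-w) x) = x := by
      have := uMap_inv n (-w) x hnwn
      rwa [neg_neg] at this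
    have h2 : uMap n w (-(uMap n (-w) v)) = -v := by
      rw [uMap_neg]
      have := uMap_inv n (-w) v hnwn
      rw [neg_neg] at this
      rw [this]
    rw [h1, h2]
    abel
  have hγinv : ∀ x, γinv x = uMap n (-w) x + v' := by
    intro x
    calc γinv x = γinv (γ (uMap n (-w) x + v')) := by rw [hgid x]
      _ = uMap n (-w) x + v' := hleft _
  have hv'n : v' ⟨n + 2, by omega⟩ ≠ 0 := by
    rw [hv']
    simp only [Pi.neg_apply]
    rw [uMap_last n (-w) v hnwn]
    exact neg_ne_zero.mpr (ne_of_gt hv)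
  exact main_lemma n (-w) v' hnw0 hnwn (neg_ne_zero.mpr hw) hv'n γinv hγinv
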